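/- arXiv:2104.13509 — 8 statements merged into one kernel-verified Lean document; each statement's English description precedes it below -/
import Mathlib

section
/- Let v_f > 0, k_j > 0, and fix an average density K with k_j/2 < K ≤ k_j. Over the admissible set S_K = {(k1,k2) : 0 ≤ k1 ≤ k_j, 0 ≤ k2 ≤ k_j, k1 + k2 = 2K}, the network space-mean speed V(k1,k2) = (k1·G(k1) + k2·G(k2))/(k1 + k2) attains its minimum value v_f(3 - 2K/k_j - k_j/K), and this minimum is attained at the configuration (k1, k2) = (2K - k_j, k_j) in which one bin is gridlocked at jam density. -/
/-- Greenshields speed at density `k`, with free-flow speed `vf` and jam density `kj`. -/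
noncomputable def G (vf kj k : ℝ) : ℝ := vf * (1 - k / kj)

/-- Two-bin network space-mean speed without cruising. -/
noncomputable def V (vf kj k1 k2 : ℝ) : ℝ :=
  (k1 * G vf kj k1 + k2 * G vf kj k2) / (k1 + k2)

/-- Admissible two-bin configurations at network average density `K`. -/
def SK (kj K : ℝ) : Set (ℝ × ℝ) :=
  {p | 0 ≤ p.1 ∧ p.1 ≤ kj ∧ 0 ≤ p.2 ∧ p.2 ≤ kj ∧ p.1 + p.2 = 2 * K}

/-- Without cruising, for `kj/2 < K ≤ kj`, the minimum of `V` over `S_K` is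
`vf (3 - 2K/kj - kj/K)`, attained at `(2K - kj, kj)` where one bin is gridlocked. -/
theorem two_bin_lower_envelope_high (vf kj K : ℝ) (hvf : 0 < vf) (hkj : 0 < kj)
    (hK0 : kj / 2 < K) (hKj : K ≤ kj) :
    (∀ p ∈ SK kj K, vf * (3 - 2 * K / kj - kj / K) ≤ V vf kj p.1 p.2) ∧
    ((2 * K - kj, kj) ∈ SK kj K ∧
      V vf kj (2 * K - kj) kj = vf * (3 - 2 * K / kj - kj / K)) := by
  have hKpos : 0 < K := lt_trans (by positivity) hK0
  constructor
  · rintro ⟨a, b⟩ ⟨ha0, hakj, hb0, hbkj, hab⟩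
    simp only at ha0 hakj hb0 hbkj hab ⊢
    rw [V, G, G, hab]
    rw [le_div_iff₀ (by linarith : (0:ℝ) < 2 * K)]
    have key : (kj - a) * (kj - b) ≥ 0 := mul_nonneg (by linarith) (by linarith)
    have h1 : a * (vf * (1 - a / kj)) + b * (vf * (1 - b / kj))
        = vf * ((a + b) - (a ^ 2 + b ^ 2) / kj) := by
      field_simp; ring
    rw [h1, hab]
    rw [show vf * (3 - 2 * K / kj - kj / K) * (2 * K)
        = vf * ((3 - 2 * K / kj - kj / K) * (2 * K)) by ring]
    apply mul_le_mul_of_nonneg_left _ hvf.le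
    have hab2 : a ^ 2 + b ^ 2 ≤ (2 * K - kj) ^ 2 + kj ^ 2 := by nlinarith
    have heq : (3 - 2 * K / kj - kj / K) * (2 * K)
        = 2 * K - ((2 * K - kj) ^ 2 + kj ^ 2) / kj := by
      field_simp; ring
    rw [heq]
    gcongr
  · have hmem : (2 * K - kj, kj) ∈ SK kj K := by
      simp only [SK, Set.mem_setOf_eq]
      exact ⟨by linarith, by linarith, hkj.le, le_rfl, by ring⟩
    refine ⟨hmem, ?_⟩
    rw [V, G, G]
    have h2K : (2 * K - kj) + kj = 2 * K := by ring
    rw [h2K]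
    field_simp
    ring
end

section
/- Let v_f > 0 and k_j > 0. The two-bin system without cruising can gridlock at only half the jam density, and no earlier: at K = k_j/2 there exists (k1,k2) ∈ S_{k_j/2} with V(k1,k2) = 0 (namely (k1,k2) = (0, k_j)), whereas for every average density K with 0 < K < k_j/2 and every (k1,k2) ∈ S_K with k1 + k2 > 0, one has V(k1,k2) > 0. -/
/-- The two-bin system without cruising can gridlock at only half the jam density,
and no earlier: at `K = kj/2` the configuration `(0, kj)` is admissible with zero
space-mean speed, while for every `0 < K < kj/2` every admissible configuration
with positive total density has positive space-mean speed. -/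
theorem two_bin_gridlock_half_jam (vf kj : ℝ) (hvf : 0 < vf) (hkj : 0 < kj) :
    (((0 : ℝ), kj) ∈ SK kj (kj / 2) ∧ V vf kj 0 kj = 0) ∧
    (∀ K : ℝ, 0 < K → K < kj / 2 →
      ∀ p ∈ SK kj K, 0 < p.1 + p.2 → 0 < V vf kj p.1 p.2) := by
  constructor
  · constructor
    · refine ⟨le_rfl, hkj.le, hkj.le, le_rfl, by ring⟩
    · simp [V, G, div_self hkj.ne']
  · rintro K hK hK2 ⟨k1, k2⟩ ⟨h1, h1j, h2, h2j, hsum⟩ hpos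
    simp only at *
    have hlt : k1 + k2 < kj := by linarith
    have hnum : 0 < k1 * G vf kj k1 + k2 * G vf kj k2 := by
      have h1' : k1 * G vf kj k1 + k2 * G vf kj k2 =
          vf * ((k1 + k2) - (k1 ^ 2 + k2 ^ 2) / kj) := by
        simp only [G]; field_simp; ring
      rw [h1']
      apply mul_pos hvf
      have : k1 ^ 2 + k2 ^ 2 < kj * (k1 + k2) := by nlinarith
      have := (div_lt_iff₀ hkj).mpr (by linarith : k1 ^ 2 + k2 ^ 2 < (k1 + k2) * kj)
      linarith
    exact div_pos hnum hpos
end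

section
/- Let v_f > 0, k_j > 0, 0 < v_c < v_f, k_c = (v_f - v_c)·k_j/v_f, and fix an average density K with 0 < K ≤ k_c/4. Over the admissible set S_K = {(k1,k2) : 0 ≤ k1 ≤ k_j, 0 ≤ k2 ≤ k_j, k1 + k2 = 2K}, the cruising space-mean speed W(k1,k2) = (k1·G(k1) + k2·min{v_c, G(k2)})/(k1 + k2) attains its maximum value v_f(1 - 2K/k_j), and this maximum is attained at (k1, k2) = (2K, 0). -/
/-- Two-bin network space-mean speed where all vehicles in bin 2 cruise for parking
at desired cruising speed `vc` (worst case). -/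
noncomputable def W (vf kj vc k1 k2 : ℝ) : ℝ :=
  (k1 * G vf kj k1 + k2 * min vc (G vf kj k2)) / (k1 + k2)

/-!
Write `q k = k G(k)` for the Greenshields flow. Since `q` is quadratic,
`q(k₁ + k₂) = q(k₁) + k₂ G(2k₁ + k₂)`, so merging both bins into one at density
`k₁ + k₂ = 2K` beats the cruising configuration as soon as `v_c ≤ G(2k₁ + k₂)`, i.e.
`2k₁ + k₂ ≤ k_c`; and `2k₁ + k₂ ≤ 2(k₁ + k₂) = 4K ≤ k_c`. The merged configuration is
`(2K, 0)`, where `W = G(2K)`.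
-/

/-- The density `k_c` at which the Greenshields speed drops to `vc`. -/
noncomputable def criticalDensity (vf kj vc : ℝ) : ℝ := (vf - vc) * kj / vf

lemma add_mul_G_add (vf kj a b : ℝ) :
    (a + b) * G vf kj (a + b) = a * G vf kj a + b * G vf kj (2 * a + b) := by
  unfold G
  ring

lemma le_G_of_le_criticalDensity {vf kj vc k : ℝ} (hvf : 0 < vf) (hkj : 0 < kj)
    (hk : k ≤ criticalDensity vf kj vc) : vc ≤ G vf kj k := by
  rw [criticalDensity, le_div_iff₀ hvf] at hk
  rw [G, mul_one_sub, mul_div_assoc', le_sub_comm, div_le_iff₀ hkj]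
  linarith

lemma criticalDensity_le {vf kj vc : ℝ} (hvf : 0 < vf) (hkj : 0 ≤ kj) (hvc : 0 ≤ vc) :
    criticalDensity vf kj vc ≤ kj := by
  rw [criticalDensity, div_le_iff₀ hvf]
  nlinarith

lemma W_le_G_add {vf kj vc k1 k2 : ℝ} (hk2 : 0 ≤ k2) (hpos : 0 < k1 + k2)
    (hvc : vc ≤ G vf kj (2 * k1 + k2)) : W vf kj vc k1 k2 ≤ G vf kj (k1 + k2) := by
  rw [W, div_le_iff₀ hpos, mul_comm (G _ _ _), add_mul_G_add]
  gcongr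
  exact (min_le_left _ _).trans hvc

lemma W_zero_right {vf kj vc k : ℝ} (hk : k ≠ 0) : W vf kj vc k 0 = G vf kj k := by
  rw [W, zero_mul, add_zero, add_zero, mul_div_cancel_left₀ _ hk]

theorem cruising_upper_envelope_1_general (vf kj vc K : ℝ)
    (hvf : 0 < vf) (hkj : 0 < kj) (hvc0 : 0 < vc)
    (hK0 : 0 < K) (hK : K ≤ (vf - vc) * kj / vf / 4) :
    (∀ p ∈ SK kj K, W vf kj vc p.1 p.2 ≤ vf * (1 - 2 * K / kj)) ∧
    ((2 * K, (0 : ℝ)) ∈ SK kj K ∧ W vf kj vc (2 * K) 0 = vf * (1 - 2 * K / kj)) := by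
  have hKc : 4 * K ≤ criticalDensity vf kj vc := by unfold criticalDensity; linarith
  have hkc_le := criticalDensity_le hvf hkj.le hvc0.le
  refine ⟨fun p hp => ?_, ⟨by linarith, by linarith, le_rfl, hkj.le, add_zero _⟩,
    W_zero_right (by positivity)⟩
  obtain ⟨-, -, hk2, -, hsum⟩ := hp
  have hvc : vc ≤ G vf kj (2 * p.1 + p.2) := le_G_of_le_criticalDensity hvf hkj (by linarith)
  calc W vf kj vc p.1 p.2 ≤ G vf kj (p.1 + p.2) := W_le_G_add hk2 (by linarith) hvc
    _ = G vf kj (2 * K) := by rw [hsum]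

/-- With cruising (worst case), for `0 < K ≤ kc/4`, the maximum of `W` over `S_K`
is `vf (1 - 2K/kj)`, attained at `(2K, 0)`. -/
theorem cruising_upper_envelope_1 (vf kj vc K : ℝ)
    (hvf : 0 < vf) (hkj : 0 < kj) (hvc0 : 0 < vc) (hvcf : vc < vf)
    (hK0 : 0 < K) (hK : K ≤ (vf - vc) * kj / vf / 4) :
    (∀ p ∈ SK kj K, W vf kj vc p.1 p.2 ≤ vf * (1 - 2 * K / kj)) ∧
    ((2 * K, (0 : ℝ)) ∈ SK kj K ∧ W vf kj vc (2 * K) 0 = vf * (1 - 2 * K / kj)) :=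
  cruising_upper_envelope_1_general vf kj vc K hvf hkj hvc0 hK0 hK
end

section
/- Let v_f > 0, k_j > 0, 0 < v_c < v_f, k_c = (v_f - v_c)·k_j/v_f, and fix an average density K with 3k_c/4 < K ≤ k_c. Over the admissible set S_K = {(k1,k2) : 0 ≤ k1 ≤ k_j, 0 ≤ k2 ≤ k_j, k1 + k2 = 2K}, the cruising space-mean speed W(k1,k2) = (k1·G(k1) + k2·min{v_c, G(k2)})/(k1 + k2) attains its maximum value v_c + (v_f - v_c)·(2 - k_c/K)·(1 - K/k_c), and this maximum is attained at (k1, k2) = (2K - k_c, k_c). -/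
/-!
Put `kc = (vf - vc) kj / vf`, the density at which the Greenshields speed drops to `vc`, and
write the second bin's density as `b`, so that the first bin carries `s - b` with `s = 2K`.
The speed of bin 2 is at most `vc` and at most `G b`, and we use whichever bound is active.
For `b ≤ kc` the total flow is bounded by `q(s - b) + vc b`, with `q k = k G k`, which increases
in `b` as long as `3 kc ≤ 2 s`; for `b ≥ kc` it is bounded by `q(s - b) + q(b)`, which by
concavity of `q` decreases in `b` beyond `s / 2 ≤ kc`. Both bounds equal the flow at `b = kc`.
-/

section Greenshields

variable {vf kj : ℝ}

theorem G_critical_density (hvf : vf ≠ 0) (hkj : kj ≠ 0) (vc : ℝ) :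
    G vf kj ((vf - vc) * kj / vf) = vc := by
  unfold G
  field_simp
  ring

theorem flow_add_cruise_le (hvf : 0 ≤ vf) (hkj : 0 < kj) {s a b : ℝ} (hba : b ≤ a)
    (has : 3 * a ≤ 2 * s) :
    (s - b) * G vf kj (s - b) + b * G vf kj a ≤ (s - a) * G vf kj (s - a) + a * G vf kj a := by
  have key : 0 ≤ vf / kj * ((a - b) * (2 * s - 2 * a - b)) :=
    mul_nonneg (div_nonneg hvf hkj.le) (mul_nonneg (by linarith) (by linarith))
  rw [← sub_nonneg]
  convert key using 1
  unfold G
  field_simp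
  ring

theorem flow_add_flow_antitone (hvf : 0 ≤ vf) (hkj : 0 < kj) {s a b : ℝ} (hsa : s ≤ 2 * a)
    (hab : a ≤ b) :
    (s - b) * G vf kj (s - b) + b * G vf kj b ≤ (s - a) * G vf kj (s - a) + a * G vf kj a := by
  have key : 0 ≤ 2 * (vf / kj) * ((b - a) * (b + a - s)) :=
    mul_nonneg (by positivity) (mul_nonneg (by linarith) (by linarith))
  rw [← sub_nonneg]
  convert key using 1
  unfold G
  field_simp
  ring

end Greenshields

section Cruising

variable {vf kj vc kc K : ℝ}

theorem W_le_W_critical (hvf : 0 ≤ vf) (hkj : 0 < kj) (hGkc : G vf kj kc = vc)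
    (hK0 : 3 * kc ≤ 4 * K) (hK : K ≤ kc) (hKpos : 0 < K) {k1 k2 : ℝ} (hk2 : 0 ≤ k2)
    (hsum : k1 + k2 = 2 * K) :
    W vf kj vc k1 k2 ≤ W vf kj vc (2 * K - kc) kc := by
  obtain rfl : k1 = 2 * K - k2 := by linarith
  unfold W
  rw [← hGkc, min_self]
  simp only [sub_add_cancel]
  gcongr ?_ / _
  rcases le_total k2 kc with hle | hge
  · calc _ ≤ (2 * K - k2) * G vf kj (2 * K - k2) + k2 * G vf kj kc := by
          gcongr
          exact min_le_left _ _
      _ ≤ _ := flow_add_cruise_le hvf hkj hle (by linarith)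
  · calc _ ≤ (2 * K - k2) * G vf kj (2 * K - k2) + k2 * G vf kj k2 := by
          gcongr
          exact min_le_right _ _
      _ ≤ _ := flow_add_flow_antitone hvf hkj (by linarith) hge

theorem W_critical_eq (hkj : kj ≠ 0) (hGkc : G vf kj kc = vc) (hK : K ≠ 0) (hkc : kc ≠ 0) :
    W vf kj vc (2 * K - kc) kc = vc + (vf - vc) * (2 - kc / K) * (1 - K / kc) := by
  subst hGkc
  unfold W G
  rw [min_self, sub_add_cancel]
  field_simp
  ring

end Cruising

theorem cruising_upper_envelope_3_general (vf kj vc K : ℝ)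
    (hvf : 0 < vf) (hkj : 0 < kj) (hvc0 : 0 < vc)
    (hK0 : 3 * ((vf - vc) * kj / vf) / 4 < K) (hK : K ≤ (vf - vc) * kj / vf) :
    (∀ p ∈ SK kj K,
        W vf kj vc p.1 p.2 ≤
          vc + (vf - vc) * (2 - (vf - vc) * kj / vf / K) * (1 - K / ((vf - vc) * kj / vf))) ∧
    ((2 * K - (vf - vc) * kj / vf, (vf - vc) * kj / vf) ∈ SK kj K ∧
      W vf kj vc (2 * K - (vf - vc) * kj / vf) ((vf - vc) * kj / vf) =
        vc + (vf - vc) * (2 - (vf - vc) * kj / vf / K) * (1 - K / ((vf - vc) * kj / vf))) := by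
  set kc := (vf - vc) * kj / vf with hkc
  have hGkc : G vf kj kc = vc := G_critical_density hvf.ne' hkj.ne' vc
  have hkc_pos : 0 < kc := by linarith
  have hK_pos : 0 < K := by linarith
  have hkc_le : kc ≤ kj := by
    rw [hkc, div_le_iff₀ hvf]
    nlinarith
  rw [← W_critical_eq hkj.ne' hGkc hK_pos.ne' hkc_pos.ne']
  refine ⟨fun p hp => ?_, ⟨by linarith, by linarith, hkc_pos.le, hkc_le, by ring⟩, rfl⟩
  exact W_le_W_critical hvf.le hkj hGkc (by linarith) hK hK_pos hp.2.2.1 hp.2.2.2.2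

/-- With cruising (worst case), for `3kc/4 < K ≤ kc`, the maximum of `W` over `S_K`
is `vc + (vf - vc)(2 - kc/K)(1 - K/kc)`, attained at `(2K - kc, kc)`. -/
theorem cruising_upper_envelope_3 (vf kj vc K : ℝ)
    (hvf : 0 < vf) (hkj : 0 < kj) (hvc0 : 0 < vc) (hvcf : vc < vf)
    (hK0 : 3 * ((vf - vc) * kj / vf) / 4 < K) (hK : K ≤ (vf - vc) * kj / vf) :
    (∀ p ∈ SK kj K,
        W vf kj vc p.1 p.2 ≤
          vc + (vf - vc) * (2 - (vf - vc) * kj / vf / K) * (1 - K / ((vf - vc) * kj / vf))) ∧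
    ((2 * K - (vf - vc) * kj / vf, (vf - vc) * kj / vf) ∈ SK kj K ∧
      W vf kj vc (2 * K - (vf - vc) * kj / vf) ((vf - vc) * kj / vf) =
        vc + (vf - vc) * (2 - (vf - vc) * kj / vf / K) * (1 - K / ((vf - vc) * kj / vf))) :=
  cruising_upper_envelope_3_general vf kj vc K hvf hkj hvc0 hK0 hK
end

section
/- Let v_f > 0, k_j > 0, 0 < v_c < v_f, k_c = (v_f - v_c)·k_j/v_f, and fix an average density K with k_c < K ≤ k_j. Over the admissible set S_K = {(k1,k2) : 0 ≤ k1 ≤ k_j, 0 ≤ k2 ≤ k_j, k1 + k2 = 2K}, the cruising space-mean speed W(k1,k2) = (k1·G(k1) + k2·min{v_c, G(k2)})/(k1 + k2) attains its maximum value v_f(1 - K/k_j), and this maximum is attained at the homogeneous configuration k1 = k2 = K; i.e., beyond the critical density the upper envelope with cruising coincides with the Greenshields network fundamental diagram. -/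
/-! The flow `k ↦ k * G k` is a concave quadratic, so splitting the vehicles unevenly between
the bins never beats the homogeneous split, and cruising only lowers the speed further. Beyond
the critical density the Greenshields speed is already below `vc`, so at the homogeneous
configuration cruising does not bind and the bound is attained. -/

theorem sub_mul_G_add_mul_G (vf kj a b : ℝ) :
    (a + b) * G vf kj ((a + b) / 2) - (a * G vf kj a + b * G vf kj b) =
      vf * (a - b) ^ 2 / (2 * kj) := by
  unfold G
  ring

theorem mul_G_add_mul_G_le {vf kj : ℝ} (hvf : 0 ≤ vf) (hkj : 0 ≤ kj) (a b : ℝ) :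
    a * G vf kj a + b * G vf kj b ≤ (a + b) * G vf kj ((a + b) / 2) := by
  have hgap : 0 ≤ vf * (a - b) ^ 2 / (2 * kj) := by positivity
  linarith [sub_mul_G_add_mul_G vf kj a b]

theorem W_le_G_midpoint {vf kj : ℝ} (vc : ℝ) (hvf : 0 ≤ vf) (hkj : 0 ≤ kj) {a b : ℝ}
    (hb : 0 ≤ b) (hab : 0 < a + b) :
    W vf kj vc a b ≤ G vf kj ((a + b) / 2) := by
  have hcruise : b * min vc (G vf kj b) ≤ b * G vf kj b :=
    mul_le_mul_of_nonneg_left (min_le_right _ _) hb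
  rw [W, div_le_iff₀ hab, mul_comm]
  linarith [mul_G_add_mul_G_le hvf hkj a b]

theorem G_le_iff {vf kj : ℝ} (hvf : 0 < vf) (hkj : 0 < kj) (vc K : ℝ) :
    G vf kj K ≤ vc ↔ (vf - vc) * kj / vf ≤ K := by
  have hG : G vf kj K = vf - vf * K / kj := by unfold G; ring
  rw [hG, sub_le_comm, le_div_iff₀ hkj, div_le_iff₀ hvf, mul_comm K]

theorem W_self_of_G_le {vf kj vc K : ℝ} (hK : K ≠ 0) (hG : G vf kj K ≤ vc) :
    W vf kj vc K K = G vf kj K := by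
  rw [W, min_eq_right hG, div_eq_iff (by simpa [← two_mul] using hK)]
  ring

theorem cruising_upper_envelope_4_general (vf kj vc K : ℝ)
    (hvf : 0 < vf) (hkj : 0 < kj) (hvcf : vc < vf)
    (hK0 : (vf - vc) * kj / vf < K) (hK : K ≤ kj) :
    (∀ p ∈ SK kj K, W vf kj vc p.1 p.2 ≤ vf * (1 - K / kj)) ∧
    ((K, K) ∈ SK kj K ∧ W vf kj vc K K = vf * (1 - K / kj)) := by
  have hKpos : 0 < K := lt_trans (by have := sub_pos.2 hvcf; positivity) hK0
  refine ⟨?_, ⟨⟨hKpos.le, hK, hKpos.le, hK, (two_mul K).symm⟩, ?_⟩⟩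
  · rintro ⟨a, b⟩ ⟨-, -, hb, -, hab⟩
    have hmid : (a + b) / 2 = K := by linarith
    have := W_le_G_midpoint vc hvf.le hkj.le hb (by linarith)
    rwa [hmid] at this
  · exact W_self_of_G_le hKpos.ne' ((G_le_iff hvf hkj vc K).2 hK0.le)

/-- With cruising (worst case), for `kc < K ≤ kj`, the maximum of `W` over `S_K`
is `vf (1 - K/kj)`, attained at the homogeneous configuration `k1 = k2 = K`:
beyond the critical density the upper envelope coincides with the Greenshields NFD. -/
theorem cruising_upper_envelope_4 (vf kj vc K : ℝ)
    (hvf : 0 < vf) (hkj : 0 < kj) (hvc0 : 0 < vc) (hvcf : vc < vf)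
    (hK0 : (vf - vc) * kj / vf < K) (hK : K ≤ kj) :
    (∀ p ∈ SK kj K, W vf kj vc p.1 p.2 ≤ vf * (1 - K / kj)) ∧
    ((K, K) ∈ SK kj K ∧ W vf kj vc K K = vf * (1 - K / kj)) :=
  cruising_upper_envelope_4_general vf kj vc K hvf hkj hvcf hK0 hK
end

section
/- Let v_f > 0, k_j > 0, 0 < v_c < v_f, k_c = (v_f - v_c)·k_j/v_f, and fix an average density K with k_c/2 < K ≤ k_j/2. Over the admissible set S_K = {(k1,k2) : 0 ≤ k1 ≤ k_j, 0 ≤ k2 ≤ k_j, k1 + k2 = 2K}, the cruising space-mean speed W(k1,k2) = (k1·G(k1) + k2·min{v_c, G(k2)})/(k1 + k2) attains its minimum value v_f(1 - 2K/k_j), and this minimum is attained at (k1, k2) = (0, 2K). -/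
/-- With cruising (worst case), for `kc/2 < K ≤ kj/2`, the minimum of `W` over `S_K`
is `vf (1 - 2K/kj)`, attained at `(0, 2K)`. -/
theorem cruising_lower_envelope_2 (vf kj vc K : ℝ)
    (hvf : 0 < vf) (hkj : 0 < kj) (hvc0 : 0 < vc) (hvcf : vc < vf)
    (hK0 : (vf - vc) * kj / vf / 2 < K) (hK : K ≤ kj / 2) :
    (∀ p ∈ SK kj K, vf * (1 - 2 * K / kj) ≤ W vf kj vc p.1 p.2) ∧
    (((0 : ℝ), 2 * K) ∈ SK kj K ∧ W vf kj vc 0 (2 * K) = vf * (1 - 2 * K / kj)) := by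
  have hkc : 0 < (vf - vc) * kj / vf / 2 := by
    have h := mul_pos (sub_pos.2 hvcf) hkj
    positivity
  have hKpos : 0 < K := hkc.trans hK0
  have h0 : (vf - vc) * kj < 2 * K * vf := by
    rw [div_div, div_lt_iff₀ (by positivity)] at hK0
    nlinarith
  have hGvc : vf * (1 - 2 * K / kj) ≤ vc := by
    have h1 : vf - vc ≤ vf * (2 * K) / kj := by
      rw [le_div_iff₀ hkj]; nlinarith
    have h2 : vf * (1 - 2 * K / kj) = vf - vf * (2 * K) / kj := by ring
    linarith [h2]
  refine ⟨?_, ⟨?_, ?_⟩⟩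
  case refine_2 =>
    simp only [SK, Set.mem_setOf_eq]
    refine ⟨le_refl 0, hkj.le, by linarith, by linarith, by ring⟩
  · rintro p ⟨h1, h2, h3, h4, h5⟩
    have hG1 : vf * (1 - 2 * K / kj) ≤ G vf kj p.1 := by
      unfold G; gcongr <;> linarith
    have hG2 : vf * (1 - 2 * K / kj) ≤ min vc (G vf kj p.2) := by
      refine le_min hGvc ?_
      unfold G; gcongr <;> linarith
    rw [W, le_div_iff₀ (by rw [h5]; positivity)]
    nlinarith [mul_le_mul_of_nonneg_left hG1 h1, mul_le_mul_of_nonneg_left hG2 h3]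
  · simp only [W, G, zero_mul, zero_add]
    rw [min_eq_right hGvc, mul_div_cancel_left₀ _ (by positivity : (2 * K : ℝ) ≠ 0)]
end

section
/- Let v_f > 0, k_j > 0, 0 < v_c < v_f, k_c = (v_f - v_c)·k_j/v_f, and fix an average density K with (k_c + k_j)/2 < K ≤ k_j. Over the admissible set S_K = {(k1,k2) : 0 ≤ k1 ≤ k_j, 0 ≤ k2 ≤ k_j, k1 + k2 = 2K}, the cruising space-mean speed W(k1,k2) = (k1·G(k1) + k2·min{v_c, G(k2)})/(k1 + k2) attains its minimum value v_f(3 - 2K/k_j - k_j/K), and this minimum is attained at (k1, k2) = (k_j, 2K - k_j). -/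
lemma min_eq_G (vf kj vc k2 : ℝ) (hvf : 0 < vf) (hkj : 0 < kj)
    (hk2c : (vf - vc) * kj / vf ≤ k2) : min vc (G vf kj k2) = G vf kj k2 := by
  apply min_eq_right
  rw [div_le_iff₀ hvf] at hk2c
  rw [G, ← sub_nonneg]
  have h : vc - vf * (1 - k2 / kj) = (k2 * vf - (vf - vc) * kj) / kj := by
    field_simp; ring
  rw [h]
  exact div_nonneg (by linarith) hkj.le

/-- With cruising (worst case), for `(kc + kj)/2 < K ≤ kj`, the minimum of `W`
over `S_K` is `vf (3 - 2K/kj - kj/K)`, attained at `(kj, 2K - kj)`. -/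
theorem cruising_lower_envelope_4 (vf kj vc K : ℝ)
    (hvf : 0 < vf) (hkj : 0 < kj) (hvc0 : 0 < vc) (hvcf : vc < vf)
    (hK0 : ((vf - vc) * kj / vf + kj) / 2 < K) (hK : K ≤ kj) :
    (∀ p ∈ SK kj K, vf * (3 - 2 * K / kj - kj / K) ≤ W vf kj vc p.1 p.2) ∧
    ((kj, 2 * K - kj) ∈ SK kj K ∧
      W vf kj vc kj (2 * K - kj) = vf * (3 - 2 * K / kj - kj / K)) := by
  have hkc0 : 0 ≤ (vf - vc) * kj / vf :=
    div_nonneg (mul_nonneg (by linarith) hkj.le) hvf.le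
  have hK' : 0 < K := by linarith
  constructor
  · rintro ⟨k1, k2⟩ ⟨h1, h2, h3, h4, h5⟩
    simp only at h1 h2 h3 h4 h5 ⊢
    have hk2c : (vf - vc) * kj / vf ≤ k2 := by linarith
    rw [W, min_eq_G vf kj vc k2 hvf hkj hk2c, h5, G, G,
      le_div_iff₀ (by linarith : (0:ℝ) < 2 * K)]
    have hk2 : k2 = 2 * K - k1 := by linarith
    subst hk2
    have key : k1 ^ 2 + (2 * K - k1) ^ 2 ≤ kj ^ 2 + (2 * K - kj) ^ 2 := by
      nlinarith [mul_nonneg (sub_nonneg.2 h2) (by linarith : (0:ℝ) ≤ k1 + kj - 2 * K)]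
    rw [← sub_nonneg]
    have h : k1 * (vf * (1 - k1 / kj)) + (2 * K - k1) * (vf * (1 - (2 * K - k1) / kj)) -
        vf * (3 - 2 * K / kj - kj / K) * (2 * K) =
        vf * ((kj ^ 2 + (2 * K - kj) ^ 2) - (k1 ^ 2 + (2 * K - k1) ^ 2)) / kj := by
      field_simp
      ring
    rw [h]
    exact div_nonneg (mul_nonneg hvf.le (by linarith)) hkj.le
  · refine ⟨⟨hkj.le, le_refl kj, show (0:ℝ) ≤ 2 * K - kj by linarith,
      show 2 * K - kj ≤ kj by linarith, show kj + (2 * K - kj) = 2 * K by ring⟩, ?_⟩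
    have hk2c : (vf - vc) * kj / vf ≤ 2 * K - kj := by linarith
    rw [W, min_eq_G vf kj vc _ hvf hkj hk2c, G, G]
    field_simp
    ring
end

section
/- Let v_f > 0, k_j > 0, 0 < v_c < v_f, and k_c = (v_f - v_c)·k_j/v_f. For every average density K with 0 < K ≤ k_j and every (k1,k2) in the admissible set S_K = {(k1,k2) : 0 ≤ k1 ≤ k_j, 0 ≤ k2 ≤ k_j, k1 + k2 = 2K}, the cruising space-mean speed satisfies W(k1,k2) ≤ v_f(1 - K/k_j); moreover the supremum of W over S_K is strictly smaller than v_f(1 - K/k_j) if and only if 0 < K < k_c, and equals v_f(1 - K/k_j) if and only if k_c ≤ K ≤ k_j. That is, cruising-for-parking strictly lowers the upper envelope of the network fundamental diagram exactly in the density range below the critical density. -/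
set_option maxHeartbeats 1000000

/-- For every `0 < K ≤ kj`, the cruising space-mean speed is bounded above by the
no-cruising upper envelope `vf (1 - K/kj)` on `S_K`; moreover the supremum of `W`
over `S_K` is strictly below that envelope iff `0 < K < kc`, and equals it iff
`kc ≤ K ≤ kj`: cruising strictly lowers the NFD upper envelope exactly below the
critical density. -/
theorem cruising_lowers_upper_envelope_iff (vf kj vc : ℝ)
    (hvf : 0 < vf) (hkj : 0 < kj) (hvc0 : 0 < vc) (hvcf : vc < vf) :
    ∀ K : ℝ, 0 < K → K ≤ kj →
      (∀ p ∈ SK kj K, W vf kj vc p.1 p.2 ≤ vf * (1 - K / kj)) ∧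
      (sSup ((fun p : ℝ × ℝ => W vf kj vc p.1 p.2) '' SK kj K) < vf * (1 - K / kj) ↔
        0 < K ∧ K < (vf - vc) * kj / vf) ∧
      (sSup ((fun p : ℝ × ℝ => W vf kj vc p.1 p.2) '' SK kj K) = vf * (1 - K / kj) ↔
        (vf - vc) * kj / vf ≤ K ∧ K ≤ kj) := by
  intro K hK hKkj
  have hkjne : kj ≠ 0 := ne_of_gt hkj
  set c : ℝ := kj⁻¹ with hc_def
  have hcpos : 0 < c := inv_pos.2 hkj
  have hc : kj * c = 1 := mul_inv_cancel₀ hkjne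
  set kc : ℝ := (vf - vc) * kj / vf with hkc_def
  have hkc_pos : 0 < kc := div_pos (mul_pos (by linarith) hkj) hvf
  have hvfkc : vf * kc = (vf - vc) * kj := by
    rw [hkc_def]; field_simp
  have hvc_eq : vc = vf * (1 - kc * c) := by
    linear_combination c * hvfkc + (vf - vc) * hc
  set E : ℝ := vf * (1 - K / kj) with hE_def
  have hE_eq : E = vf * (1 - K * c) := by
    rw [hE_def, div_eq_mul_inv, hc_def]
  -- pointwise upper bound
  have hub : ∀ p ∈ SK kj K, W vf kj vc p.1 p.2 ≤ E := by
    rintro ⟨k1, k2⟩ ⟨h10, h1j, h20, h2j, hsum⟩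
    simp only at h10 h1j h20 h2j hsum ⊢
    obtain rfl : k1 = 2 * K - k2 := by linarith
    rw [W, hsum, div_le_iff₀ (by linarith : (0:ℝ) < 2 * K), hE_eq]
    simp only [G, div_eq_mul_inv, ← hc_def]
    have h2m : k2 * min vc (vf * (1 - k2 * c)) ≤ k2 * (vf * (1 - k2 * c)) :=
      mul_le_mul_of_nonneg_left (min_le_right _ _) h20
    nlinarith [mul_nonneg (mul_nonneg hvf.le hcpos.le) (sq_nonneg (K - k2))]
  -- nonempty and bounded
  have hmemKK : ((K, K) : ℝ × ℝ) ∈ SK kj K := ⟨hK.le, hKkj, hK.le, hKkj, by ring⟩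
  have hne : ((fun p : ℝ × ℝ => W vf kj vc p.1 p.2) '' SK kj K).Nonempty :=
    ⟨_, ⟨(K, K), hmemKK, rfl⟩⟩
  have hbdd : BddAbove ((fun p : ℝ × ℝ => W vf kj vc p.1 p.2) '' SK kj K) := by
    refine ⟨E, ?_⟩
    rintro x ⟨p, hp, rfl⟩
    exact hub p hp
  -- case kc ≤ K : sup equals E
  have hsup_eq : kc ≤ K → sSup ((fun p : ℝ × ℝ => W vf kj vc p.1 p.2) '' SK kj K) = E := by
    intro hkcK
    have hGK : G vf kj K ≤ vc := by
      simp only [G, div_eq_mul_inv, ← hc_def]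
      rw [hvc_eq]
      nlinarith [mul_pos hvf hcpos]
    have hWKK : W vf kj vc K K = E := by
      rw [W, min_eq_right hGK, hE_def]
      simp only [G]
      have hKne : K ≠ 0 := ne_of_gt hK
      field_simp
    refine le_antisymm (csSup_le hne ?_) (le_csSup hbdd ⟨(K, K), hmemKK, hWKK⟩)
    rintro x ⟨p, hp, rfl⟩
    exact hub p hp
  -- case K < kc : sup strictly below E
  have hsup_lt : K < kc → sSup ((fun p : ℝ × ℝ => W vf kj vc p.1 p.2) '' SK kj K) < E := by
    intro hKkc
    set δ : ℝ := min (K / 2) ((kc - K) / 2) with hδ_def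
    have hδpos : 0 < δ := lt_min (by linarith) (by linarith)
    have hδ1 : δ ≤ K / 2 := min_le_left _ _
    have hδ2 : δ ≤ (kc - K) / 2 := min_le_right _ _
    set ε : ℝ := min (vf * δ ^ 2 * c / K) (vf * (kc - K) * c / 8) with hε_def
    have hεpos : 0 < ε :=
      lt_min (div_pos (mul_pos (mul_pos hvf (pow_pos hδpos 2)) hcpos) hK)
        (div_pos (mul_pos (mul_pos hvf (by linarith)) hcpos) (by norm_num))
    have hε1 : 2 * K * ε ≤ 2 * vf * δ ^ 2 * c := by
      have h1 : ε ≤ vf * δ ^ 2 * c / K := min_le_left _ _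
      rw [le_div_iff₀ hK] at h1
      nlinarith
    have hε2 : 2 * K * ε ≤ K * vf * (kc - K) * c / 4 := by
      have h1 : ε ≤ vf * (kc - K) * c / 8 := min_le_right _ _
      nlinarith [mul_le_mul_of_nonneg_left h1 (by linarith : (0:ℝ) ≤ 2 * K)]
    have key : ∀ p ∈ SK kj K, W vf kj vc p.1 p.2 ≤ E - ε := by
      rintro ⟨k1, k2⟩ ⟨h10, h1j, h20, h2j, hsum⟩
      simp only at h10 h1j h20 h2j hsum ⊢
      obtain rfl : k1 = 2 * K - k2 := by linarith
      rw [W, hsum, div_le_iff₀ (by linarith : (0:ℝ) < 2 * K), hE_eq]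
      simp only [G, div_eq_mul_inv, ← hc_def]
      by_cases hcase : K - δ < k2 ∧ k2 < K + δ
      · -- near the diagonal: min is vc, cruising deficit kicks in
        obtain ⟨hl, hr⟩ := hcase
        have hk2pos : K / 2 ≤ k2 := by linarith
        have hkck2 : (kc - K) / 2 ≤ kc - k2 := by linarith
        have hvcle : vc ≤ vf * (1 - k2 * c) := by
          rw [hvc_eq]
          nlinarith [mul_pos hvf hcpos]
        rw [min_eq_left hvcle, hvc_eq]
        nlinarith [mul_nonneg (mul_nonneg hvf.le hcpos.le) (sq_nonneg (K - k2)),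
          mul_le_mul_of_nonneg_left
            (mul_le_mul hk2pos hkck2 (by linarith) (by linarith))
            (mul_pos hvf hcpos).le]
      · -- far from the diagonal: quadratic deficit
        have hfar : δ ^ 2 ≤ (k2 - K) ^ 2 := by
          rcases not_and_or.1 hcase with h | h
          · push_neg at h
            nlinarith
          · push_neg at h
            nlinarith
        have h2m : k2 * min vc (vf * (1 - k2 * c)) ≤ k2 * (vf * (1 - k2 * c)) :=
          mul_le_mul_of_nonneg_left (min_le_right _ _) h20
        nlinarith [mul_le_mul_of_nonneg_left hfar (mul_pos hvf hcpos).le]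
    have hle : sSup ((fun p : ℝ × ℝ => W vf kj vc p.1 p.2) '' SK kj K) ≤ E - ε := by
      refine csSup_le hne ?_
      rintro x ⟨p, hp, rfl⟩
      exact key p hp
    linarith
  refine ⟨hub, ?_, ?_⟩
  · constructor
    · intro hlt
      refine ⟨hK, ?_⟩
      by_contra hge
      push_neg at hge
      exact absurd (hsup_eq hge) (ne_of_lt hlt)
    · rintro ⟨_, hKkc⟩
      exact hsup_lt hKkc
  · constructor
    · intro heq
      refine ⟨?_, hKkj⟩
      by_contra hlt
      push_neg at hlt
      exact absurd heq (ne_of_lt (hsup_lt hlt))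
    · rintro ⟨hkcK, _⟩
      exact hsup_eq hkcK
end
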